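/- arXiv:2210.00381 — 2 statements merged into one kernel-verified Lean document; each statement's English description precedes it below -/
import Mathlib

section
/- Suppose the binormal flow magnitude is a polynomial in curvature: ν = μ = 0 and α = Σ_{n=1}^{N} aₙ kⁿ with a₁,…,a_N ∈ ℝ, and suppose ∂M/∂t = iR M + ω T for a real-valued function R(s,t), where ω = ⟨∂M/∂t, T⟩. Define f(x) = Σ_{n=1}^{N} aₙ (n/(n+1)) x^{n+1}. Then there exists a real-valued function A of t alone such that the Hasimoto wave function satisfies the fully nonlinear Schrödinger-type equation i ∂ψ/∂t + ∂²/∂s²((α/k) ψ) + f(|ψ|) ψ = A(t) ψ. -/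
open scoped BigOperators RealInnerProductSpace
open Complex

noncomputable section

abbrev E3 : Type := EuclideanSpace ℝ (Fin 3)

/-- Partial derivative with respect to the first (arclength) variable. -/
noncomputable def dS {V : Type} [NormedAddCommGroup V] [NormedSpace ℝ V]
    (F : ℝ → ℝ → V) : ℝ → ℝ → V := fun s t => deriv (fun x => F x t) s

/-- Partial derivative with respect to the second (time) variable. -/
noncomputable def dT {V : Type} [NormedAddCommGroup V] [NormedSpace ℝ V]
    (F : ℝ → ℝ → V) : ℝ → ℝ → V := fun s t => deriv (fun x => F s x) t

/-- Complexification of a real vector in `ℝ³`. -/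
noncomputable def cvec (v : E3) : Fin 3 → ℂ := fun i => (v i : ℂ)

/-- Bilinear extension of the real inner product to `ℂ³`. -/
noncomputable def cip (u v : Fin 3 → ℂ) : ℂ := ∑ i, u i * v i

/-- The phase `θ(s,t) = ∫₀^s τ(s',t) ds'`. -/
noncomputable def θf (τ : ℝ → ℝ → ℝ) : ℝ → ℝ → ℝ :=
  fun s t => ∫ x in (0:ℝ)..s, τ x t

/-- The Hasimoto wave function `ψ = k e^{iθ}`. -/
noncomputable def ψf (k τ : ℝ → ℝ → ℝ) : ℝ → ℝ → ℂ :=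
  fun s t => (k s t : ℂ) * Complex.exp (Complex.I * (θf τ s t : ℂ))

/-- The complexified frame vector `M = (N + iB) e^{iθ}`. -/
noncomputable def Mf (N B : ℝ → ℝ → E3) (τ : ℝ → ℝ → ℝ) : ℝ → ℝ → (Fin 3 → ℂ) :=
  fun s t => Complex.exp (Complex.I * (θf τ s t : ℂ)) •
    (cvec (N s t) + Complex.I • cvec (B s t))

/-- `ω = ⟨∂M/∂t, T⟩` (bilinear inner product). -/
noncomputable def ωf (T N B : ℝ → ℝ → E3) (τ : ℝ → ℝ → ℝ) : ℝ → ℝ → ℂ :=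
  fun s t => cip (dT (Mf N B τ) s t) (cvec (T s t))

/-! ### Helper lemmas -/

section helpers
variable {V : Type} [NormedAddCommGroup V] [NormedSpace ℝ V] {F : ℝ → ℝ → V}

lemma slice_s (hF : ContDiff ℝ (⊤ : ℕ∞) (Function.uncurry F)) (t : ℝ) :
    ContDiff ℝ (⊤ : ℕ∞) (fun x => F x t) :=
  hF.comp (contDiff_id.prodMk contDiff_const)

lemma slice_t (hF : ContDiff ℝ (⊤ : ℕ∞) (Function.uncurry F)) (s : ℝ) :
    ContDiff ℝ (⊤ : ℕ∞) (fun y => F s y) :=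
  hF.comp (contDiff_const.prodMk contDiff_id)

lemma hasDerivAt_dS (hF : ContDiff ℝ (⊤ : ℕ∞) (Function.uncurry F)) (s t : ℝ) :
    HasDerivAt (fun x => F x t) (dS F s t) s :=
  ((slice_s hF t).differentiable (by simp) s).hasDerivAt

lemma hasDerivAt_dT (hF : ContDiff ℝ (⊤ : ℕ∞) (Function.uncurry F)) (s t : ℝ) :
    HasDerivAt (fun y => F s y) (dT F s t) t :=
  ((slice_t hF s).differentiable (by simp) t).hasDerivAt

lemma contDiff_dS_slice (hF : ContDiff ℝ (⊤ : ℕ∞) (Function.uncurry F)) (t : ℝ) :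
    ContDiff ℝ (⊤ : ℕ∞) (fun x => dS F x t) := by
  have h : ContDiff ℝ (⊤ : ℕ∞) (fun x => F x t) := (slice_s hF t).of_le (by simp)
  rw [contDiff_infty_iff_deriv] at h
  exact h.2

lemma contDiff_dS2_slice (hF : ContDiff ℝ (⊤ : ℕ∞) (Function.uncurry F)) (t : ℝ) :
    ContDiff ℝ (⊤ : ℕ∞) (fun x => dS (dS F) x t) := by
  have h := contDiff_dS_slice hF t
  rw [contDiff_infty_iff_deriv] at h
  exact h.2

lemma hasDerivAt_dS2 (hF : ContDiff ℝ (⊤ : ℕ∞) (Function.uncurry F)) (s t : ℝ) :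
    HasDerivAt (fun x => dS F x t) (dS (dS F) s t) s :=
  ((contDiff_dS_slice hF t).differentiable (by simp) s).hasDerivAt

lemma hasDerivAt_dS3 (hF : ContDiff ℝ (⊤ : ℕ∞) (Function.uncurry F)) (s t : ℝ) :
    HasDerivAt (fun x => dS (dS F) x t) (dS (dS (dS F)) s t) s :=
  ((contDiff_dS2_slice hF t).differentiable (by simp) s).hasDerivAt

lemma dT_eq_fderiv (hF : ContDiff ℝ (⊤ : ℕ∞) (Function.uncurry F)) (s t : ℝ) :
    dT F s t = fderiv ℝ (Function.uncurry F) (s, t) (0, 1) := by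
  have hc : HasDerivAt (fun y : ℝ => (s, y)) ((0 : ℝ), (1 : ℝ)) t :=
    (hasDerivAt_const t s).prodMk (hasDerivAt_id t)
  have := ((hF.differentiable (by simp) (s, t)).hasFDerivAt).comp_hasDerivAt t hc
  exact this.deriv

lemma continuous_dT (hF : ContDiff ℝ (⊤ : ℕ∞) (Function.uncurry F)) :
    Continuous (fun p : ℝ × ℝ => dT F p.1 p.2) := by
  have h1 : Continuous (fun p : ℝ × ℝ => fderiv ℝ (Function.uncurry F) p ((0 : ℝ), (1 : ℝ))) :=
    (hF.continuous_fderiv (by simp)).clm_apply continuous_const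
  convert h1 using 1
  funext p
  exact dT_eq_fderiv hF p.1 p.2

end helpers

/-- The nonlinear-potential primitive `g(x) = ∑ aₙ (n/(n+1)) x^(n+1)`. -/
noncomputable def gP (Nn : ℕ) (a : ℕ → ℝ) (x : ℝ) : ℝ :=
  ∑ n ∈ Finset.Icc 1 Nn, a n * ((n : ℝ) / ((n : ℝ) + 1)) * x ^ (n + 1)

/-- The auxiliary function `h = (α'' - ατ²)/k`. -/
noncomputable def hhf (α k τ : ℝ → ℝ → ℝ) : ℝ → ℝ → ℝ :=
  fun s t => (dS (dS α) s t - α s t * τ s t ^ 2) / k s t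

theorem stmt11
    (γ T N B : ℝ → ℝ → E3) (k τ : ℝ → ℝ → ℝ)
    (hγsm : ContDiff ℝ (⊤ : ℕ∞) (Function.uncurry γ))
    (hTsm : ContDiff ℝ (⊤ : ℕ∞) (Function.uncurry T))
    (hNsm : ContDiff ℝ (⊤ : ℕ∞) (Function.uncurry N))
    (hBsm : ContDiff ℝ (⊤ : ℕ∞) (Function.uncurry B))
    (hksm : ContDiff ℝ (⊤ : ℕ∞) (Function.uncurry k))
    (hτsm : ContDiff ℝ (⊤ : ℕ∞) (Function.uncurry τ))
    (hkpos : ∀ s t, 0 < k s t)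
    (hTdef : ∀ s t, dS γ s t = T s t)
    (horth : ∀ s t, ⟪T s t, T s t⟫ = 1 ∧ ⟪N s t, N s t⟫ = 1 ∧
      ⟪B s t, B s t⟫ = 1 ∧ ⟪T s t, N s t⟫ = 0 ∧
      ⟪T s t, B s t⟫ = 0 ∧ ⟪N s t, B s t⟫ = 0)
    (hFS1 : ∀ s t, dS T s t = k s t • N s t)
    (hFS2 : ∀ s t, dS N s t = -(k s t) • T s t + τ s t • B s t)
    (hFS3 : ∀ s t, dS B s t = -(τ s t) • N s t)
    (ν μ α : ℝ → ℝ → ℝ)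
    (hνsm : ContDiff ℝ (⊤ : ℕ∞) (Function.uncurry ν))
    (hμsm : ContDiff ℝ (⊤ : ℕ∞) (Function.uncurry μ))
    (hαsm : ContDiff ℝ (⊤ : ℕ∞) (Function.uncurry α))
    (hkin : ∀ s t, dT γ s t = ν s t • T s t + μ s t • N s t + α s t • B s t)
    (hmixγ : ∀ s t, dS (dT γ) s t = dT (dS γ) s t)
    (hmixT : ∀ s t, dS (dT T) s t = dT (dS T) s t)
    (hmixN : ∀ s t, dS (dT N) s t = dT (dS N) s t)
    (hmixB : ∀ s t, dS (dT B) s t = dT (dS B) s t)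
    (Nn : ℕ) (a : ℕ → ℝ)
    (hν0 : ∀ s t, ν s t = 0)
    (hμ0 : ∀ s t, μ s t = 0)
    (hαp : ∀ s t, α s t = ∑ n ∈ Finset.Icc 1 Nn, a n * k s t ^ n)
    (R : ℝ → ℝ → ℝ)
    (hMt : ∀ s t, dT (Mf N B τ) s t =
      (Complex.I * (R s t : ℂ)) • Mf N B τ s t + ωf T N B τ s t • cvec (T s t))
    :
    ∃ A : ℝ → ℝ, ∀ s t,
      Complex.I * dT (ψf k τ) s t +
        dS (dS (fun s' t' => ((α s' t' / k s' t' : ℝ) : ℂ) * ψf k τ s' t')) s t +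
        ((∑ n ∈ Finset.Icc 1 Nn,
            a n * ((n : ℝ) / ((n : ℝ) + 1)) * ‖ψf k τ s t‖ ^ (n+1) : ℝ) : ℂ) *
          ψf k τ s t =
      ((A t : ℝ) : ℂ) * ψf k τ s t := by
  classical
  have hkne : ∀ s t, k s t ≠ 0 := fun s t => (hkpos s t).ne'
  -- orthonormality, symmetric versions
  have hNT : ∀ s t, ⟪N s t, T s t⟫ = 0 := fun s t => by
    rw [real_inner_comm]; exact (horth s t).2.2.2.1
  have hBT : ∀ s t, ⟪B s t, T s t⟫ = 0 := fun s t => by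
    rw [real_inner_comm]; exact (horth s t).2.2.2.2.1
  have hBN : ∀ s t, ⟪B s t, N s t⟫ = 0 := fun s t => by
    rw [real_inner_comm]; exact (horth s t).2.2.2.2.2
  have hTT : ∀ s t, ⟪T s t, T s t⟫ = 1 := fun s t => (horth s t).1
  have hNN : ∀ s t, ⟪N s t, N s t⟫ = 1 := fun s t => (horth s t).2.1
  have hBB : ∀ s t, ⟪B s t, B s t⟫ = 1 := fun s t => (horth s t).2.2.1
  have hTN : ∀ s t, ⟪T s t, N s t⟫ = 0 := fun s t => (horth s t).2.2.2.1
  have hTB : ∀ s t, ⟪T s t, B s t⟫ = 0 := fun s t => (horth s t).2.2.2.2.1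
  have hNB : ∀ s t, ⟪N s t, B s t⟫ = 0 := fun s t => (horth s t).2.2.2.2.2
  -- ⟪∂ₜN, N⟫ = 0 and ⟪∂ₜB, B⟫ = 0
  have hNtN : ∀ s t, ⟪dT N s t, N s t⟫ = 0 := by
    intro s t
    have h1 := (hasDerivAt_dT hNsm s t).inner ℝ (hasDerivAt_dT hNsm s t)
    have h2 : (fun y => ⟪N s y, N s y⟫) = fun _ : ℝ => (1 : ℝ) :=
      funext fun y => hNN s y
    rw [h2] at h1
    have h3 := h1.unique (hasDerivAt_const t (1 : ℝ))
    have h4 : ⟪N s t, dT N s t⟫ = ⟪dT N s t, N s t⟫ := real_inner_comm _ _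
    linarith [h3, h4]
  have hBtB : ∀ s t, ⟪dT B s t, B s t⟫ = 0 := by
    intro s t
    have h1 := (hasDerivAt_dT hBsm s t).inner ℝ (hasDerivAt_dT hBsm s t)
    have h2 : (fun y => ⟪B s y, B s y⟫) = fun _ : ℝ => (1 : ℝ) :=
      funext fun y => hBB s y
    rw [h2] at h1
    have h3 := h1.unique (hasDerivAt_const t (1 : ℝ))
    have h4 : ⟪B s t, dT B s t⟫ = ⟪dT B s t, B s t⟫ := real_inner_comm _ _
    linarith [h3, h4]
  -- ∂ₜγ = α • B
  have hγt : dT γ = fun s t => α s t • B s t := by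
    funext s t
    rw [hkin s t, hν0 s t, hμ0 s t]
    simp
  -- ∂ₜT = α' • B - (ατ) • N
  have hTt : ∀ s t, dT T s t =
      dS α s t • B s t - (α s t * τ s t) • N s t := by
    intro s t
    have hTfun : T = dS γ := funext fun s => funext fun t => (hTdef s t).symm
    have e1 : dT T s t = dS (dT γ) s t := by rw [hTfun, ← hmixγ s t]
    rw [e1, hγt]
    have hD : HasDerivAt (fun x => α x t • B x t)
        (α s t • dS B s t + dS α s t • B s t) s :=
      (hasDerivAt_dS hαsm s t).smul (hasDerivAt_dS hBsm s t)
    have := hD.deriv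
    show deriv (fun x => α x t • B x t) s = _
    rw [this, hFS3 s t]
    module
  -- the key vector equation from hmixT
  have EqT : ∀ s t, dT k s t • N s t + k s t • dT N s t =
      (α s t * τ s t * k s t) • T s t
        - (2 * dS α s t * τ s t + α s t * dS τ s t) • N s t
        + (dS (dS α) s t - α s t * τ s t ^ 2) • B s t := by
    intro s t
    have hRHS : dT (dS T) s t = dT k s t • N s t + k s t • dT N s t := by
      have hfun : dS T = fun s t => k s t • N s t :=
        funext fun s => funext fun t => hFS1 s t
      rw [hfun]
      have hD : HasDerivAt (fun y => k s y • N s y)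
          (dT k s t • N s t + k s t • dT N s t) t := by
        have := (hasDerivAt_dT hksm s t).fun_smul (hasDerivAt_dT hNsm s t)
        refine this.congr_deriv ?_
        module
      exact hD.deriv
    have hLHS : dS (dT T) s t =
        (α s t * τ s t * k s t) • T s t
          - (2 * dS α s t * τ s t + α s t * dS τ s t) • N s t
          + (dS (dS α) s t - α s t * τ s t ^ 2) • B s t := by
      have hfun : dT T = fun s t => dS α s t • B s t - (α s t * τ s t) • N s t :=
        funext fun s => funext fun t => hTt s t
      rw [hfun]
      have hD : HasDerivAt (fun x => dS α x t • B x t - (α x t * τ x t) • N x t)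
          ((dS (dS α) s t • B s t + dS α s t • dS B s t)
            - ((dS α s t * τ s t + α s t * dS τ s t) • N s t
                + (α s t * τ s t) • dS N s t)) s := by
        have h1 := (hasDerivAt_dS2 hαsm s t).fun_smul (hasDerivAt_dS hBsm s t)
        have h2 := ((hasDerivAt_dS hαsm s t).fun_mul (hasDerivAt_dS hτsm s t)).fun_smul
          (hasDerivAt_dS hNsm s t)
        have := h1.fun_sub h2
        refine this.congr_deriv ?_
        module
      have := hD.deriv
      show deriv (fun x => dS α x t • B x t - (α x t * τ x t) • N x t) s = _
      rw [this, hFS2 s t, hFS3 s t]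
      module
    rw [← hRHS, ← hLHS, hmixT s t]
  -- ∂ₜk = -(2α'τ + ατ')
  have hkt : ∀ s t, dT k s t = -(2 * dS α s t * τ s t + α s t * dS τ s t) := by
    intro s t
    have h := congrArg (fun v : E3 => ⟪v, N s t⟫) (EqT s t)
    simp only [inner_add_left, inner_sub_left, real_inner_smul_left,
      hNN, hTN, hBN, hNtN] at h
    linarith [h]
  -- ∂ₜN = (ατ) • T + h • B
  have hNt : ∀ s t, dT N s t =
      (α s t * τ s t) • T s t + hhf α k τ s t • B s t := by
    intro s t
    have h1 : k s t • dT N s t =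
        (α s t * τ s t * k s t) • T s t + (dS (dS α) s t - α s t * τ s t ^ 2) • B s t := by
      have h := EqT s t
      rw [hkt s t] at h
      have : k s t • dT N s t =
          (dT k s t • N s t + k s t • dT N s t) - dT k s t • N s t := by module
      rw [hkt s t] at this
      rw [this, h]
      module
    have h2 : dT N s t = (k s t)⁻¹ • (k s t • dT N s t) := by
      rw [smul_smul, inv_mul_cancel₀ (hkne s t), one_smul]
    rw [h2, h1, smul_add, smul_smul, smul_smul]
    have c1 : (k s t)⁻¹ * (α s t * τ s t * k s t) = α s t * τ s t := by
      rw [inv_mul_eq_div, mul_div_assoc, div_self (hkne s t), mul_one]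
    have c2 : (k s t)⁻¹ * (dS (dS α) s t - α s t * τ s t ^ 2) = hhf α k τ s t := by
      rw [hhf, inv_mul_eq_div]
    rw [c1, c2]
  -- derivative of the slice of hhf
  have hhd : ∀ s t, HasDerivAt (fun x => hhf α k τ x t) (dS (hhf α k τ) s t) s := by
    intro s t
    have hdiff : DifferentiableAt ℝ (fun x => hhf α k τ x t) s := by
      have h2 : DifferentiableAt ℝ (fun x => dS (dS α) x t - α x t * τ x t ^ 2) s :=
        (hasDerivAt_dS3 hαsm s t).differentiableAt.sub
          ((hasDerivAt_dS hαsm s t).differentiableAt.mul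
            ((hasDerivAt_dS hτsm s t).differentiableAt.pow 2))
      exact h2.div (hasDerivAt_dS hksm s t).differentiableAt (hkne s t)
    exact hdiff.hasDerivAt
  -- ∂ₜτ = k α' + (hh)'
  have hτt : ∀ s t, dT τ s t = k s t * dS α s t + dS (hhf α k τ) s t := by
    intro s t
    have hLHS : dT (dS N) s t =
        (-(dT k s t)) • T s t + (-(k s t)) • dT T s t
          + dT τ s t • B s t + τ s t • dT B s t := by
      have hfun : dS N = fun s t => -(k s t) • T s t + τ s t • B s t :=
        funext fun s => funext fun t => hFS2 s t
      rw [hfun]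
      have hD : HasDerivAt (fun y => -(k s y) • T s y + τ s y • B s y)
          ((-(dT k s t)) • T s t + (-(k s t)) • dT T s t
            + dT τ s t • B s t + τ s t • dT B s t) t := by
        have h1 := ((hasDerivAt_dT hksm s t).fun_neg).fun_smul (hasDerivAt_dT hTsm s t)
        have h2 := (hasDerivAt_dT hτsm s t).fun_smul (hasDerivAt_dT hBsm s t)
        have := h1.fun_add h2
        refine this.congr_deriv ?_
        module
      exact hD.deriv
    have hRHS : dS (dT N) s t =
        (dS α s t * τ s t + α s t * dS τ s t) • T s t
          + (α s t * τ s t) • dS T s t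
          + dS (hhf α k τ) s t • B s t + hhf α k τ s t • dS B s t := by
      have hfun : dT N = fun s t => (α s t * τ s t) • T s t + hhf α k τ s t • B s t :=
        funext fun s => funext fun t => hNt s t
      rw [hfun]
      have hD : HasDerivAt (fun x => (α x t * τ x t) • T x t + hhf α k τ x t • B x t)
          ((dS α s t * τ s t + α s t * dS τ s t) • T s t
            + (α s t * τ s t) • dS T s t
            + dS (hhf α k τ) s t • B s t + hhf α k τ s t • dS B s t) s := by
        have h1 := ((hasDerivAt_dS hαsm s t).fun_mul (hasDerivAt_dS hτsm s t)).fun_smul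
          (hasDerivAt_dS hTsm s t)
        have h2 := (hhd s t).fun_smul (hasDerivAt_dS hBsm s t)
        have := h1.fun_add h2
        refine this.congr_deriv ?_
        module
      exact hD.deriv
    have heq : (-(dT k s t)) • T s t + (-(k s t)) • dT T s t
          + dT τ s t • B s t + τ s t • dT B s t =
        (dS α s t * τ s t + α s t * dS τ s t) • T s t
          + (α s t * τ s t) • dS T s t
          + dS (hhf α k τ) s t • B s t + hhf α k τ s t • dS B s t := by
      rw [← hLHS, ← hRHS, hmixN s t]
    have h2 := congrArg (fun v : E3 => ⟪v, B s t⟫) heq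
    simp only [inner_add_left, real_inner_smul_left, hTB, hBB, hBtB] at h2
    rw [hTt s t, hFS1 s t, hFS3 s t] at h2
    simp only [inner_sub_left, inner_add_left, real_inner_smul_left, inner_neg_left,
      hBB, hNB, hTB] at h2
    linarith [h2]
  -- formula for dS α
  have hα' : ∀ s t, dS α s t =
      ∑ n ∈ Finset.Icc 1 Nn, a n * ((n : ℝ) * k s t ^ (n - 1) * dS k s t) := by
    intro s t
    have hfun : (fun x => α x t) = fun x => ∑ n ∈ Finset.Icc 1 Nn, a n * k x t ^ n :=
      funext fun x => hαp x t
    have hD : HasDerivAt (fun x => ∑ n ∈ Finset.Icc 1 Nn, a n * k x t ^ n)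
        (∑ n ∈ Finset.Icc 1 Nn, a n * ((n : ℝ) * k s t ^ (n - 1) * dS k s t)) s :=
      HasDerivAt.fun_sum fun n _ => ((hasDerivAt_dS hksm s t).fun_pow n).const_mul (a n)
    show deriv (fun x => α x t) s = _
    rw [hfun]
    exact hD.deriv
  -- k * α' = derivative of gP ∘ k
  have HP : ∀ t x, HasDerivAt (fun x => gP Nn a (k x t) + hhf α k τ x t) (dT τ x t) x := by
    intro t x
    have hg0 : HasDerivAt (fun x => gP Nn a (k x t))
        (∑ n ∈ Finset.Icc 1 Nn,
          a n * ((n : ℝ) / ((n : ℝ) + 1)) * ((((n + 1 : ℕ)) : ℝ) * k x t ^ (n + 1 - 1) * dS k x t)) x :=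
      HasDerivAt.fun_sum fun n _ => ((hasDerivAt_dS hksm x t).fun_pow (n + 1)).const_mul
        (a n * ((n : ℝ) / ((n : ℝ) + 1)))
    have hval : (∑ n ∈ Finset.Icc 1 Nn,
          a n * ((n : ℝ) / ((n : ℝ) + 1)) * ((((n + 1 : ℕ)) : ℝ) * k x t ^ (n + 1 - 1) * dS k x t))
        = k x t * dS α x t := by
      rw [hα' x t, Finset.mul_sum]
      refine Finset.sum_congr rfl fun n hn => ?_
      have hn1 : 1 ≤ n := (Finset.mem_Icc.mp hn).1
      have hk : k x t ^ (n - 1) * k x t = k x t ^ n := by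
        rw [← pow_succ, Nat.sub_add_cancel hn1]
      have hne : ((n : ℝ) + 1) ≠ 0 := by positivity
      simp only [Nat.add_sub_cancel]
      push_cast
      rw [← hk]
      field_simp
    rw [hτt x t]
    have hsum := hg0.add (hhd x t)
    rw [hval] at hsum
    exact hsum
  -- time derivative of θ
  have hθt : ∀ s t, dT (θf τ) s t =
      (gP Nn a (k s t) + hhf α k τ s t) - (gP Nn a (k 0 t) + hhf α k τ 0 t) := by
    intro s t
    have hcτ : Continuous fun p : ℝ × ℝ => τ p.1 p.2 := by
      have := hτsm.continuous; exact this
    have hcτ' : Continuous (fun p : ℝ × ℝ => dT τ p.1 p.2) := continuous_dT hτsm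
    -- bound on compact set
    obtain ⟨C, hC⟩ := (IsCompact.exists_bound_of_continuousOn
      ((isCompact_uIcc (a := (0:ℝ)) (b := s)).prod (isCompact_closedBall t 1))
      hcτ'.continuousOn)
    have key : HasDerivAt (fun y => ∫ x in (0:ℝ)..s, τ x y)
        (∫ x in (0:ℝ)..s, dT τ x t) t := by
      have := (intervalIntegral.hasDerivAt_integral_of_dominated_loc_of_deriv_le
        (F := fun y x => τ x y) (F' := fun y x => dT τ x y) (bound := fun _ => C)
        (a := (0:ℝ)) (b := s) (x₀ := t) (s := Metric.ball t 1) (μ := MeasureTheory.volume) (Metric.ball_mem_nhds t one_pos)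
        (Filter.Eventually.of_forall fun y =>
          (hcτ.comp (continuous_id.prodMk continuous_const)).aestronglyMeasurable)
        ((hcτ.comp (continuous_id.prodMk continuous_const)).intervalIntegrable 0 s)
        ((hcτ'.comp (continuous_id.prodMk continuous_const)).aestronglyMeasurable)
        (Filter.Eventually.of_forall fun x hx y hy => by
          have := hC (x, y) ⟨Set.uIoc_subset_uIcc hx, Metric.ball_subset_closedBall hy⟩
          simpa using this)
        (intervalIntegrable_const)
        (Filter.Eventually.of_forall fun x _ y _ => hasDerivAt_dT hτsm x y))
      exact this.2
    have e1 : dT (θf τ) s t = ∫ x in (0:ℝ)..s, dT τ x t := key.deriv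
    rw [e1]
    have hint : IntervalIntegrable (fun x => dT τ x t) MeasureTheory.volume 0 s :=
      (hcτ'.comp (continuous_id.prodMk continuous_const)).intervalIntegrable 0 s
    have := intervalIntegral.integral_eq_sub_of_hasDerivAt
      (f := fun x => gP Nn a (k x t) + hhf α k τ x t)
      (f' := fun x => dT τ x t) (a := (0:ℝ)) (b := s)
      (fun x _ => HP t x) hint
    rw [this]
  -- s-derivative of θ
  have hθs : ∀ s t, HasDerivAt (fun x => θf τ x t) (τ s t) s := by
    intro s t
    have hc : Continuous fun x => τ x t := slice_s hτsm t |>.continuous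
    exact (hc.integral_hasStrictDerivAt 0 s).hasDerivAt
  -- time derivative of ψ
  have hψt : ∀ s t, dT (ψf k τ) s t =
      (((dT k s t : ℝ) : ℂ) + Complex.I * (k s t : ℂ) * ((dT (θf τ) s t : ℝ) : ℂ)) *
        Complex.exp (Complex.I * (θf τ s t : ℂ)) := by
    intro s t
    have hθ : HasDerivAt (fun y => θf τ s y) (dT (θf τ) s t) t := by
      have hcτ : Continuous fun p : ℝ × ℝ => τ p.1 p.2 := hτsm.continuous
      have hcτ' : Continuous (fun p : ℝ × ℝ => dT τ p.1 p.2) := continuous_dT hτsm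
      obtain ⟨C, hC⟩ := (IsCompact.exists_bound_of_continuousOn
        ((isCompact_uIcc (a := (0:ℝ)) (b := s)).prod (isCompact_closedBall t 1))
        hcτ'.continuousOn)
      have key : HasDerivAt (fun y => ∫ x in (0:ℝ)..s, τ x y)
          (∫ x in (0:ℝ)..s, dT τ x t) t := by
        have := (intervalIntegral.hasDerivAt_integral_of_dominated_loc_of_deriv_le
          (F := fun y x => τ x y) (F' := fun y x => dT τ x y) (bound := fun _ => C)
          (a := (0:ℝ)) (b := s) (x₀ := t) (s := Metric.ball t 1) (μ := MeasureTheory.volume) (Metric.ball_mem_nhds t one_pos)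
          (Filter.Eventually.of_forall fun y =>
            (hcτ.comp (continuous_id.prodMk continuous_const)).aestronglyMeasurable)
          ((hcτ.comp (continuous_id.prodMk continuous_const)).intervalIntegrable 0 s)
          ((hcτ'.comp (continuous_id.prodMk continuous_const)).aestronglyMeasurable)
          (Filter.Eventually.of_forall fun x hx y hy => by
            have := hC (x, y) ⟨Set.uIoc_subset_uIcc hx, Metric.ball_subset_closedBall hy⟩
            simpa using this)
          (intervalIntegrable_const)
          (Filter.Eventually.of_forall fun x _ y _ => hasDerivAt_dT hτsm x y))
        exact this.2
      have : dT (θf τ) s t = ∫ x in (0:ℝ)..s, dT τ x t := key.deriv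
      rw [this]
      exact key
    have hk : HasDerivAt (fun y => ((k s y : ℝ) : ℂ)) ((dT k s t : ℝ) : ℂ) t :=
      (hasDerivAt_dT hksm s t).ofReal_comp
    have hexp : HasDerivAt (fun y => Complex.exp (Complex.I * (θf τ s y : ℂ)))
        (Complex.I * ((dT (θf τ) s t : ℝ) : ℂ) * Complex.exp (Complex.I * (θf τ s t : ℂ))) t := by
      have h1 : HasDerivAt (fun y => Complex.I * ((θf τ s y : ℝ) : ℂ))
          (Complex.I * ((dT (θf τ) s t : ℝ) : ℂ)) t := (hθ.ofReal_comp).const_mul Complex.I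
      have := h1.cexp
      convert this using 1
      ring
    have hD := hk.fun_mul hexp
    have : dT (ψf k τ) s t = deriv (fun y => ((k s y : ℝ) : ℂ) *
        Complex.exp (Complex.I * (θf τ s y : ℂ))) t := rfl
    rw [this, hD.deriv]
    ring
  -- the second-derivative term
  have hsecond : ∀ s t,
      dS (dS (fun s' t' => ((α s' t' / k s' t' : ℝ) : ℂ) * ψf k τ s' t')) s t =
      (((dS (dS α) s t : ℝ) : ℂ) - ((α s t * τ s t ^ 2 : ℝ) : ℂ)
        + Complex.I * ((2 * dS α s t * τ s t + α s t * dS τ s t : ℝ) : ℂ)) *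
        Complex.exp (Complex.I * (θf τ s t : ℂ)) := by
    intro s t
    have hfun : (fun s' t' => ((α s' t' / k s' t' : ℝ) : ℂ) * ψf k τ s' t')
        = fun s' t' => ((α s' t' : ℝ) : ℂ) * Complex.exp (Complex.I * (θf τ s' t' : ℂ)) := by
      funext s' t'
      rw [ψf]
      have hkne' : ((k s' t' : ℝ) : ℂ) ≠ 0 := by
        exact_mod_cast hkne s' t'
      push_cast
      field_simp
    rw [hfun]
    -- first derivative
    have hD1 : ∀ x, HasDerivAt (fun x => ((α x t : ℝ) : ℂ) *
        Complex.exp (Complex.I * (θf τ x t : ℂ)))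
        ((((dS α x t : ℝ) : ℂ) + Complex.I * ((α x t * τ x t : ℝ) : ℂ)) *
          Complex.exp (Complex.I * (θf τ x t : ℂ))) x := by
      intro x
      have ha : HasDerivAt (fun x => ((α x t : ℝ) : ℂ)) ((dS α x t : ℝ) : ℂ) x :=
        (hasDerivAt_dS hαsm x t).ofReal_comp
      have hexp : HasDerivAt (fun x => Complex.exp (Complex.I * (θf τ x t : ℂ)))
          (Complex.I * ((τ x t : ℝ) : ℂ) * Complex.exp (Complex.I * (θf τ x t : ℂ))) x := by
        have h1 : HasDerivAt (fun x => Complex.I * ((θf τ x t : ℝ) : ℂ))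
            (Complex.I * ((τ x t : ℝ) : ℂ)) x := ((hθs x t).ofReal_comp).const_mul Complex.I
        have := h1.cexp
        convert this using 1
        ring
      have := ha.fun_mul hexp
      refine this.congr_deriv ?_
      push_cast
      ring
    have e1 : (fun x => dS (fun s' t' => ((α s' t' : ℝ) : ℂ) *
        Complex.exp (Complex.I * (θf τ s' t' : ℂ))) x t)
        = fun x => (((dS α x t : ℝ) : ℂ) + Complex.I * ((α x t * τ x t : ℝ) : ℂ)) *
          Complex.exp (Complex.I * (θf τ x t : ℂ)) := by
      funext x
      exact (hD1 x).deriv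
    show deriv (fun x => dS _ x t) s = _
    rw [e1]
    -- second derivative
    have ha2 : HasDerivAt (fun x => ((dS α x t : ℝ) : ℂ)) ((dS (dS α) s t : ℝ) : ℂ) s :=
      (hasDerivAt_dS2 hαsm s t).ofReal_comp
    have hb2 : HasDerivAt (fun x => Complex.I * ((α x t * τ x t : ℝ) : ℂ))
        (Complex.I * ((dS α s t * τ s t + α s t * dS τ s t : ℝ) : ℂ)) s := by
      have := ((hasDerivAt_dS hαsm s t).fun_mul (hasDerivAt_dS hτsm s t)).ofReal_comp
      exact this.const_mul Complex.I
    have hexp2 : HasDerivAt (fun x => Complex.exp (Complex.I * (θf τ x t : ℂ)))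
        (Complex.I * ((τ s t : ℝ) : ℂ) * Complex.exp (Complex.I * (θf τ s t : ℂ))) s := by
      have h1 : HasDerivAt (fun x => Complex.I * ((θf τ x t : ℝ) : ℂ))
          (Complex.I * ((τ s t : ℝ) : ℂ)) s := ((hθs s t).ofReal_comp).const_mul Complex.I
      have := h1.cexp
      convert this using 1
      ring
    have hD2 := (ha2.fun_add hb2).fun_mul hexp2
    rw [hD2.deriv]
    have hI : Complex.I * Complex.I = -1 := Complex.I_mul_I
    push_cast
    ring_nf
    rw [Complex.I_sq]
    ring
  -- |ψ| = k
  have habs : ∀ s t, ‖ψf k τ s t‖ = k s t := by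
    intro s t
    rw [ψf]
    rw [norm_mul, Complex.norm_real, Real.norm_of_nonneg (hkpos s t).le, Complex.norm_exp]
    simp [Complex.mul_re]
  -- assemble
  refine ⟨fun t => gP Nn a (k 0 t) + hhf α k τ 0 t, fun s t => ?_⟩
  have hsum : ((∑ n ∈ Finset.Icc 1 Nn,
      a n * ((n : ℝ) / ((n : ℝ) + 1)) * ‖ψf k τ s t‖ ^ (n+1) : ℝ)) =
      gP Nn a (k s t) := by
    rw [gP]
    exact Finset.sum_congr rfl fun n _ => by rw [habs s t]
  rw [hψt s t, hsecond s t, hsum]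
  have hψ : ψf k τ s t = ((k s t : ℝ) : ℂ) * Complex.exp (Complex.I * (θf τ s t : ℂ)) := rfl
  rw [hψ]
  have c1 : ((dT k s t : ℝ) : ℂ) = -((2 * dS α s t * τ s t + α s t * dS τ s t : ℝ) : ℂ) := by
    exact_mod_cast congrArg (Complex.ofReal) (hkt s t)
  have c2 : ((dT (θf τ) s t : ℝ) : ℂ) =
      ((gP Nn a (k s t) : ℝ) : ℂ) + ((hhf α k τ s t : ℝ) : ℂ)
        - (((gP Nn a (k 0 t) : ℝ) : ℂ) + ((hhf α k τ 0 t : ℝ) : ℂ)) := by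
    have := congrArg (Complex.ofReal) (hθt s t)
    push_cast at this ⊢
    exact this
  have c3 : ((k s t : ℝ) : ℂ) * ((hhf α k τ s t : ℝ) : ℂ)
      = ((dS (dS α) s t : ℝ) : ℂ) - ((α s t * τ s t ^ 2 : ℝ) : ℂ) := by
    have : k s t * hhf α k τ s t = dS (dS α) s t - α s t * τ s t ^ 2 := by
      rw [hhf, mul_div_assoc']
      rw [mul_comm, mul_div_assoc, div_self (hkne s t), mul_one]
    exact_mod_cast congrArg (Complex.ofReal) this
  push_cast at c1 c2 c3 ⊢
  set E := Complex.exp (Complex.I * (θf τ s t : ℂ)) with hE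
  linear_combination (Complex.I * E) * c1 + (Complex.I ^ 2 * (k s t : ℂ) * E) * c2 - E * c3 +
    ((k s t : ℂ) * (((gP Nn a (k s t) : ℝ) : ℂ) + ((hhf α k τ s t : ℝ) : ℂ)
      - (((gP Nn a (k 0 t) : ℝ) : ℂ) + ((hhf α k τ 0 t : ℝ) : ℂ))) * E) * Complex.I_sq
end
end

section
/- Suppose the flow has no normal component, i.e. μ = 0, so ∂γ/∂t = νT + αB. Then the curvature evolves pointwise according to ∂k/∂t = 2k ∂ν/∂s + ν ∂k/∂s − 2τ ∂α/∂s − α ∂τ/∂s. -/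
open scoped BigOperators RealInnerProductSpace
open Complex

noncomputable section

section helpers
variable {V : Type} [NormedAddCommGroup V] [NormedSpace ℝ V]

theorem sliceS {F : ℝ → ℝ → V} (h : ContDiff ℝ (⊤ : ℕ∞) (Function.uncurry F)) (t : ℝ) :
    ContDiff ℝ (⊤ : ℕ∞) (fun x => F x t) := h.comp (contDiff_id.prodMk contDiff_const)

theorem sliceT {F : ℝ → ℝ → V} (h : ContDiff ℝ (⊤ : ℕ∞) (Function.uncurry F)) (s : ℝ) :
    ContDiff ℝ (⊤ : ℕ∞) (fun y => F s y) := h.comp (contDiff_const.prodMk contDiff_id)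

theorem hasDS {F : ℝ → ℝ → V} (h : ContDiff ℝ (⊤ : ℕ∞) (Function.uncurry F)) (s t : ℝ) :
    HasDerivAt (fun x => F x t) (dS F s t) s :=
  ((sliceS h t).differentiable (by simp) s).hasDerivAt

theorem hasDT {F : ℝ → ℝ → V} (h : ContDiff ℝ (⊤ : ℕ∞) (Function.uncurry F)) (s t : ℝ) :
    HasDerivAt (fun y => F s y) (dT F s t) t :=
  ((sliceT h s).differentiable (by simp) t).hasDerivAt

theorem hasDSS {F : ℝ → ℝ → V} (h : ContDiff ℝ (⊤ : ℕ∞) (Function.uncurry F)) (s t : ℝ) :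
    HasDerivAt (fun x => dS F x t) (dS (dS F) s t) s := by
  have h0 : ContDiff ℝ ((⊤:ℕ∞) : WithTop ℕ∞) (fun x => F x t) := (sliceS h t).of_le (by simp)
  have h1 : ContDiff ℝ ((⊤:ℕ∞) : WithTop ℕ∞) (deriv (fun x => F x t)) :=
    (contDiff_infty_iff_deriv.mp h0).2
  exact (h1.differentiable (by simp) s).hasDerivAt

end helpers

theorem stmt16
    (γ T N B : ℝ → ℝ → E3) (k τ : ℝ → ℝ → ℝ)
    (hγsm : ContDiff ℝ (⊤ : ℕ∞) (Function.uncurry γ))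
    (hTsm : ContDiff ℝ (⊤ : ℕ∞) (Function.uncurry T))
    (hNsm : ContDiff ℝ (⊤ : ℕ∞) (Function.uncurry N))
    (hBsm : ContDiff ℝ (⊤ : ℕ∞) (Function.uncurry B))
    (hksm : ContDiff ℝ (⊤ : ℕ∞) (Function.uncurry k))
    (hτsm : ContDiff ℝ (⊤ : ℕ∞) (Function.uncurry τ))
    (hkpos : ∀ s t, 0 < k s t)
    (hTdef : ∀ s t, dS γ s t = T s t)
    (horth : ∀ s t, ⟪T s t, T s t⟫ = 1 ∧ ⟪N s t, N s t⟫ = 1 ∧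
      ⟪B s t, B s t⟫ = 1 ∧ ⟪T s t, N s t⟫ = 0 ∧
      ⟪T s t, B s t⟫ = 0 ∧ ⟪N s t, B s t⟫ = 0)
    (hFS1 : ∀ s t, dS T s t = k s t • N s t)
    (hFS2 : ∀ s t, dS N s t = -(k s t) • T s t + τ s t • B s t)
    (hFS3 : ∀ s t, dS B s t = -(τ s t) • N s t)
    (ν μ α : ℝ → ℝ → ℝ)
    (hνsm : ContDiff ℝ (⊤ : ℕ∞) (Function.uncurry ν))
    (hμsm : ContDiff ℝ (⊤ : ℕ∞) (Function.uncurry μ))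
    (hαsm : ContDiff ℝ (⊤ : ℕ∞) (Function.uncurry α))
    (hkin : ∀ s t, dT γ s t = ν s t • T s t + μ s t • N s t + α s t • B s t)
    (hmixγ : ∀ s t, dS (dT γ) s t = dT (dS γ) s t)
    (hmixT : ∀ s t, dS (dT T) s t = dT (dS T) s t)
    (hmixN : ∀ s t, dS (dT N) s t = dT (dS N) s t)
    (hmixB : ∀ s t, dS (dT B) s t = dT (dS B) s t)
    (hμ0 : ∀ s t, μ s t = 0)
    :
    ∀ s t, dT k s t = 2 * k s t * dS ν s t + ν s t * dS k s t -
      2 * τ s t * dS α s t - α s t * dS τ s t := by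

  have e1 : ∀ s t, dT T s t =
      dS ν s t • T s t + (ν s t * k s t - α s t * τ s t) • N s t + dS α s t • B s t := by
    intro s t
    have hfun : (fun x => dT γ x t) = fun x => ν x t • T x t + α x t • B x t := by
      funext x
      rw [hkin, hμ0]; simp
    have h1 : dT T s t = dS (dT γ) s t := by
      rw [hmixγ]
      show _ = deriv (fun y => dS γ s y) t
      have hg : (fun y => dS γ s y) = fun y => T s y := funext fun y => hTdef s y
      rw [hg]; rfl
    have hd : HasDerivAt (fun x => ν x t • T x t + α x t • B x t)
        ((ν s t • dS T s t + dS ν s t • T s t) + (α s t • dS B s t + dS α s t • B s t)) s :=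
      ((hasDS hνsm s t).smul (hasDS hTsm s t)).add ((hasDS hαsm s t).smul (hasDS hBsm s t))
    rw [h1]
    show deriv (fun x => dT γ x t) s = _
    rw [hfun, hd.deriv, hFS1, hFS3]
    module
  intro s t
  obtain ⟨hT1, hN1, hB1, hTN, hTB, hNB⟩ := horth s t
  have hNT : ⟪N s t, T s t⟫ = (0:ℝ) := by rw [real_inner_comm]; exact hTN
  have hBN : ⟪B s t, N s t⟫ = (0:ℝ) := by rw [real_inner_comm]; exact hNB
  have hdtNN : ⟪dT N s t, N s t⟫ = (0:ℝ) := by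
    have hD : HasDerivAt (fun y => (⟪N s y, N s y⟫ : ℝ))
        (⟪N s t, dT N s t⟫ + ⟪dT N s t, N s t⟫) t :=
      (hasDT hNsm s t).inner ℝ (hasDT hNsm s t)
    have hc : (fun y => (⟪N s y, N s y⟫ : ℝ)) = fun _ => (1:ℝ) :=
      funext fun y => (horth s y).2.1
    rw [hc] at hD
    have h0 := hD.unique (hasDerivAt_const t 1)
    rw [real_inner_comm (N s t)] at h0
    rw [real_inner_comm]
    linarith
  have h4 : dT (dS T) s t = dT k s t • N s t + k s t • dT N s t := by
    have hfun : (fun y => dS T s y) = fun y => k s y • N s y := funext fun y => hFS1 s y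
    show deriv (fun y => dS T s y) t = _
    rw [hfun, HasDerivAt.deriv (f := fun y => k s y • N s y) ((hasDT hksm s t).smul (hasDT hNsm s t))]
    abel
  have h5 : dS (dT T) s t =
      (dS (dS ν) s t • T s t + dS ν s t • dS T s t) +
      ((dS ν s t * k s t + ν s t * dS k s t - (dS α s t * τ s t + α s t * dS τ s t)) • N s t
        + (ν s t * k s t - α s t * τ s t) • dS N s t) +
      (dS (dS α) s t • B s t + dS α s t • dS B s t) := by
    have hfun : (fun x => dT T x t) = fun x =>
        dS ν x t • T x t + (ν x t * k x t - α x t * τ x t) • N x t + dS α x t • B x t :=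
      funext fun x => e1 x t
    show deriv (fun x => dT T x t) s = _
    rw [hfun]
    rw [HasDerivAt.deriv (f := fun x =>
          dS ν x t • T x t + (ν x t * k x t - α x t * τ x t) • N x t + dS α x t • B x t) ((((hasDSS hνsm s t).smul (hasDS hTsm s t)).add
        ((((hasDS hνsm s t).mul (hasDS hksm s t)).sub
          ((hasDS hαsm s t).mul (hasDS hτsm s t))).smul (hasDS hNsm s t))).add
        ((hasDSS hαsm s t).smul (hasDS hBsm s t)))]
    simp only [Pi.sub_apply, Pi.mul_apply]
    abel
  have h6 : dT k s t • N s t + k s t • dT N s t =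
      (dS (dS ν) s t • T s t + dS ν s t • dS T s t) +
      ((dS ν s t * k s t + ν s t * dS k s t - (dS α s t * τ s t + α s t * dS τ s t)) • N s t
        + (ν s t * k s t - α s t * τ s t) • dS N s t) +
      (dS (dS α) s t • B s t + dS α s t • dS B s t) := by
    rw [← h4, ← h5, hmixT]
  rw [hFS1, hFS2, hFS3] at h6
  have h7 := congrArg (fun v : E3 => (⟪v, N s t⟫ : ℝ)) h6
  simp only [inner_add_left, real_inner_smul_left, hN1, hTN, hBN, hNT, hdtNN,
    mul_zero, mul_one, add_zero, zero_add, mul_add] at h7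
  linarith
end
end
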